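/- arXiv:1809.07321 — 3 statements merged into one kernel-verified Lean document; each statement's English description precedes it below -/
import Mathlib

section
/- Let d ∈ ℕ, L, T ∈ [0,∞), δ ∈ (0,∞), p ∈ [2,∞), let μ : ℝ^d → ℝ^d be globally Lipschitz with constant L (with respect to the Euclidean norm), let X, Y : [0,T] → ℝ^d be continuous functions, let a : [0,T] → ℝ^d be Borel measurable with ∫_0^t ‖a_s‖ ds < ∞ for all t ∈ [0,T], and assume that for all t ∈ [0,T] it holds that X_t − Y_t = X_0 − Y_0 + ∫_0^t [μ(X_s) − a_s] ds. Then for all t ∈ [0,T], ‖X_t − Y_t‖^p ≤ exp((L + (1 − 1/p)/δ) p t) (‖X_0 − Y_0‖^p + δ^(p−1) ∫_0^t ‖a_s − μ(Y_s)‖^p ds). -/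
open MeasureTheory Set Real
open scoped ENNReal NNReal

/-!
With `h = ‖X - Y‖` and `g = ‖a - μ ∘ Y‖`, the integral equation and the Lipschitz bound give
`h u ≤ h 0 + ∫₀ᵗ g + L ∫₀ᵘ h` for `u ≤ t`, so Gronwall gives `h t ≤ (h 0 + ∫₀ᵗ g) e^{L t}`.
Hölder bounds `(∫₀ᵗ g)^p ≤ t^{p-1} ∫₀ᵗ g^p`, and convexity of `x ↦ x^p` in the weighted form
`(A + B)^p ≤ (δ + t)^{p-1} (A^p / δ^{p-1} + B^p / t^{p-1})`, together with
`1 + t/δ ≤ e^{t/δ}`, produces the factor `e^{(p-1) t/δ}` and the weight `δ^{p-1}`.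
-/

theorem add_rpow_le_rpow_mul_add_div {u v a b p : ℝ} (hp : 1 ≤ p) (hu : 0 ≤ u) (hv : 0 ≤ v)
    (ha : 0 < a) (hb : 0 < b) :
    (u + v) ^ p ≤ (a + b) ^ (p - 1) * (u ^ p / a ^ (p - 1) + v ^ p / b ^ (p - 1)) := by
  have hab : 0 < a + b := add_pos ha hb
  have hc := (convexOn_rpow hp).2 (mem_Ici.2 (by positivity : 0 ≤ (a + b) * u / a))
    (mem_Ici.2 (by positivity : 0 ≤ (a + b) * v / b)) (div_pos ha hab).le (div_pos hb hab).le
    (by field_simp)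
  simp only [smul_eq_mul] at hc
  calc (u + v) ^ p
      = (a / (a + b) * ((a + b) * u / a) + b / (a + b) * ((a + b) * v / b)) ^ p := by
        congr 1; field_simp
    _ ≤ _ := hc
    _ = _ := by
        rw [div_rpow (by positivity) ha.le, div_rpow (by positivity) hb.le,
          mul_rpow hab.le hu, mul_rpow hab.le hv, rpow_sub_one hab.ne', rpow_sub_one ha.ne',
          rpow_sub_one hb.ne']
        field_simp

theorem add_rpow_le_exp_mul {A B J t δ p : ℝ} (hp : 1 ≤ p) (hA : 0 ≤ A) (hB : 0 ≤ B)
    (ht : 0 < t) (hδ : 0 < δ) (hBJ : B ^ p ≤ t ^ (p - 1) * J) :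
    (A + B) ^ p ≤ exp ((p - 1) * t / δ) * (A ^ p + δ ^ (p - 1) * J) := by
  have htp : 0 < t ^ (p - 1) := rpow_pos_of_pos ht _
  have hJ : 0 ≤ J := nonneg_of_mul_nonneg_right ((rpow_nonneg hB p).trans hBJ) htp
  calc (A + B) ^ p ≤ (δ + t) ^ (p - 1) * (A ^ p / δ ^ (p - 1) + B ^ p / t ^ (p - 1)) :=
        add_rpow_le_rpow_mul_add_div hp hA hB hδ ht
    _ ≤ (δ + t) ^ (p - 1) * (A ^ p / δ ^ (p - 1) + J) := by
        gcongr
        exact div_le_of_le_mul₀ htp.le hJ (by linarith)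
    _ = (1 + t / δ) ^ (p - 1) * (A ^ p + δ ^ (p - 1) * J) := by
        rw [show δ + t = δ * (1 + t / δ) by field_simp, mul_rpow hδ.le (by positivity)]
        field_simp
    _ ≤ exp (t / δ) ^ (p - 1) * (A ^ p + δ ^ (p - 1) * J) := by
        gcongr
        linarith [add_one_le_exp (t / δ)]
    _ = exp ((p - 1) * t / δ) * (A ^ p + δ ^ (p - 1) * J) := by
        rw [← exp_mul]; ring_nf

theorem rpow_le_exp_mul_of_le_add_mul_exp {N A B J L t δ p : ℝ} (hp : 1 ≤ p) (hN : 0 ≤ N)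
    (hA : 0 ≤ A) (hB : 0 ≤ B) (ht : 0 < t) (hδ : 0 < δ) (hNAB : N ≤ (A + B) * exp (L * t))
    (hBJ : B ^ p ≤ t ^ (p - 1) * J) :
    N ^ p ≤ exp ((L + (1 - 1 / p) / δ) * p * t) * (A ^ p + δ ^ (p - 1) * J) :=
  calc N ^ p ≤ ((A + B) * exp (L * t)) ^ p := rpow_le_rpow hN hNAB (by linarith)
    _ = exp (L * t * p) * (A + B) ^ p := by
        rw [mul_rpow (by positivity) (exp_pos _).le, ← exp_mul, mul_comm]
    _ ≤ exp (L * t * p) * (exp ((p - 1) * t / δ) * (A ^ p + δ ^ (p - 1) * J)) := by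
        gcongr; exact add_rpow_le_exp_mul hp hA hB ht hδ hBJ
    _ = exp ((L + (1 - 1 / p) / δ) * p * t) * (A ^ p + δ ^ (p - 1) * J) := by
        rw [← mul_assoc, ← exp_add]
        congr 2
        field_simp

theorem ofReal_rpow_le_exp_mul_of_le_add_mul_exp {N A B L t δ p : ℝ} {J : ℝ≥0∞} (hp : 1 ≤ p)
    (hN : 0 ≤ N) (hA : 0 ≤ A) (hB : 0 ≤ B) (ht : 0 < t) (hδ : 0 < δ)
    (hNAB : N ≤ (A + B) * exp (L * t))
    (hBJ : ENNReal.ofReal (B ^ p) ≤ ENNReal.ofReal (t ^ (p - 1)) * J) :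
    ENNReal.ofReal (N ^ p)
      ≤ ENNReal.ofReal (exp ((L + (1 - 1 / p) / δ) * p * t))
        * (ENNReal.ofReal (A ^ p) + ENNReal.ofReal (δ ^ (p - 1)) * J) := by
  rcases eq_or_ne J ⊤ with rfl | hJ
  · simp [hδ, exp_pos, rpow_pos_of_pos]
  have hBJ' : B ^ p ≤ t ^ (p - 1) * J.toReal := by
    rwa [ENNReal.ofReal_le_iff_le_toReal (ENNReal.mul_ne_top ENNReal.ofReal_ne_top hJ),
      ENNReal.toReal_mul, ENNReal.toReal_ofReal (rpow_nonneg ht.le _)] at hBJ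
  calc ENNReal.ofReal (N ^ p)
      ≤ ENNReal.ofReal (exp ((L + (1 - 1 / p) / δ) * p * t)
          * (A ^ p + δ ^ (p - 1) * J.toReal)) :=
        ENNReal.ofReal_le_ofReal (rpow_le_exp_mul_of_le_add_mul_exp hp hN hA hB ht hδ hNAB hBJ')
    _ = _ := by
        rw [ENNReal.ofReal_mul (exp_pos _).le,
          ENNReal.ofReal_add (rpow_nonneg hA _) (by positivity),
          ENNReal.ofReal_mul (rpow_nonneg hδ.le _), ENNReal.ofReal_toReal hJ]

theorem rpow_lintegral_le_mul_lintegral_rpow {α : Type*} [MeasurableSpace α] (ν : Measure α)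
    {f : α → ℝ≥0∞} (hf : AEMeasurable f ν) {p : ℝ} (hp : 1 < p) :
    (∫⁻ x, f x ∂ν) ^ p ≤ ν univ ^ (p - 1) * ∫⁻ x, f x ^ p ∂ν := by
  have hpq : p.HolderConjugate p.conjExponent := .conjExponent hp
  have holder := ENNReal.lintegral_mul_le_Lp_mul_Lq ν hpq hf aemeasurable_const
    (g := fun _ => 1)
  simp only [Pi.mul_apply, mul_one, ENNReal.one_rpow, lintegral_one] at holder
  calc (∫⁻ x, f x ∂ν) ^ p
      ≤ ((∫⁻ x, f x ^ p ∂ν) ^ (1 / p) * ν univ ^ (1 / p.conjExponent)) ^ p :=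
        ENNReal.rpow_le_rpow holder (by linarith)
    _ = ν univ ^ (p - 1) * ∫⁻ x, f x ^ p ∂ν := by
        rw [ENNReal.mul_rpow_of_nonneg _ _ (by linarith), ← ENNReal.rpow_mul, ← ENNReal.rpow_mul,
          mul_comm]
        congr 2
        · rw [Real.conjExponent]; field_simp
        · rw [one_div_mul_cancel (by positivity), ENNReal.rpow_one]

theorem ofReal_rpow_intervalIntegral_le {g : ℝ → ℝ} {a b p : ℝ} (hab : a ≤ b) (hp : 1 < p)
    (hg : IntervalIntegrable g volume a b) (hg₀ : ∀ s, 0 ≤ g s) :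
    ENNReal.ofReal ((∫ s in a..b, g s) ^ p)
      ≤ ENNReal.ofReal ((b - a) ^ (p - 1)) * ∫⁻ s in Ioc a b, ENNReal.ofReal (g s ^ p) := by
  have hp₀ : 0 ≤ p := by linarith
  rw [intervalIntegral.integral_of_le hab, ← ENNReal.ofReal_rpow_of_nonneg
      (integral_nonneg hg₀) hp₀, ofReal_integral_eq_lintegral_ofReal hg.1 (ae_of_all _ hg₀),
    ← ENNReal.ofReal_rpow_of_nonneg (by linarith) (by linarith), ← Real.volume_Ioc,
    ← Measure.restrict_apply_univ]
  simp only [← ENNReal.ofReal_rpow_of_nonneg (hg₀ _) hp₀]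
  exact rpow_lintegral_le_mul_lintegral_rpow _ hg.1.aemeasurable.ennreal_ofReal hp

theorem le_mul_exp_of_le_add_mul_integral {h : ℝ → ℝ} {C L a b : ℝ} (hL : 0 ≤ L) (hab : a ≤ b)
    (hh : ContinuousOn h (Icc a b)) (hbound : ∀ u ∈ Icc a b, h u ≤ C + L * ∫ s in a..u, h s) :
    h b ≤ C * exp (L * (b - a)) := by
  set F : ℝ → ℝ := fun u => ∫ s in a..u, h s
  have hF : ContinuousOn F (Icc a b) := by
    have := intervalIntegral.continuousOn_primitive_interval (μ := volume)
      (by rw [uIcc_of_le hab]; exact hh.integrableOn_Icc)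
    rwa [uIcc_of_le hab] at this
  have hF' : ∀ u ∈ Ico a b, HasDerivWithinAt F (h u) (Ici u) u := by
    intro u hu
    have hnhds : Icc a b ∈ nhdsWithin u (Ioi u) :=
      Filter.mem_of_superset (Ioo_mem_nhdsGT hu.2) (Ioo_subset_Icc_self.trans
        (Icc_subset_Icc_left hu.1))
    exact intervalIntegral.integral_hasDerivWithinAt_right
      ((hh.mono (Icc_subset_Icc_right hu.2.le)).intervalIntegrable_of_Icc hu.1)
      ((hh.stronglyMeasurableAtFilter_nhdsWithin measurableSet_Icc u).filter_mono
        (nhdsWithin_le_of_mem hnhds))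
      ((hh u (Ico_subset_Icc_self hu)).mono_of_mem_nhdsWithin hnhds)
  have hFb : F b ≤ gronwallBound 0 L C (b - a) :=
    le_gronwallBound_of_liminf_deriv_right_le hF
      (fun u hu _ hr => (hF' u hu).liminf_right_slope_le hr) (by simp [F])
      (fun u hu => by linarith [hbound u (Ico_subset_Icc_self hu)]) b ⟨hab, le_rfl⟩
  calc h b ≤ C + L * F b := hbound b ⟨hab, le_rfl⟩
    _ ≤ C + L * gronwallBound 0 L C (b - a) := by gcongr
    _ = C * exp (L * (b - a)) := by
        rcases eq_or_ne L 0 with rfl | hL₀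
        · simp
        · rw [gronwallBound_of_K_ne_0 hL₀]; field_simp; ring

section Perturbation

variable {E : Type*} [NormedAddCommGroup E] [NormedSpace ℝ E] {μ : E → E} {K : ℝ≥0}
  {X Y a : ℝ → E} {t : ℝ}

theorem norm_sub_le_add_integral_of_eq_add_integral (hμ : LipschitzWith K μ)
    (hX : ContinuousOn X (Icc 0 t)) (hY : ContinuousOn Y (Icc 0 t))
    (ha : IntervalIntegrable a volume 0 t)
    (heq : ∀ u ∈ Icc 0 t, X u - Y u = X 0 - Y 0 + ∫ s in 0..u, (μ (X s) - a s)) :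
    ∀ u ∈ Icc 0 t, ‖X u - Y u‖
      ≤ ‖X 0 - Y 0‖ + (∫ s in 0..t, ‖a s - μ (Y s)‖) + K * ∫ s in 0..u, ‖X s - Y s‖ := by
  intro u hu
  have hsub : uIcc 0 u ⊆ uIcc 0 t := by
    rw [uIcc_of_le hu.1, uIcc_of_le (hu.1.trans hu.2)]; exact Icc_subset_Icc_right hu.2
  have ht : 0 ≤ t := hu.1.trans hu.2
  have hμX : IntervalIntegrable (fun s => μ (X s)) volume 0 t :=
    (hμ.continuous.comp_continuousOn hX).intervalIntegrable_of_Icc ht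
  have hμY : IntervalIntegrable (fun s => μ (Y s)) volume 0 t :=
    (hμ.continuous.comp_continuousOn hY).intervalIntegrable_of_Icc ht
  have hg : IntervalIntegrable (fun s => ‖a s - μ (Y s)‖) volume 0 t := (ha.sub hμY).norm
  have hh : IntervalIntegrable (fun s => ‖X s - Y s‖) volume 0 t :=
    (hX.sub hY).norm.intervalIntegrable_of_Icc ht
  have hdrift : ∀ s, ‖μ (X s) - a s‖ ≤ ‖a s - μ (Y s)‖ + K * ‖X s - Y s‖ := fun s =>
    calc ‖μ (X s) - a s‖ = ‖(μ (X s) - μ (Y s)) + (μ (Y s) - a s)‖ := by abel_nf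
      _ ≤ K * ‖X s - Y s‖ + ‖a s - μ (Y s)‖ :=
          (norm_add_le _ _).trans (add_le_add (hμ.norm_sub_le _ _) (norm_sub_rev _ _).le)
      _ = _ := add_comm _ _
  calc ‖X u - Y u‖ = ‖X 0 - Y 0 + ∫ s in 0..u, (μ (X s) - a s)‖ := by rw [heq u hu]
    _ ≤ ‖X 0 - Y 0‖ + ∫ s in 0..u, ‖μ (X s) - a s‖ :=
        (norm_add_le _ _).trans (add_le_add_right
          (intervalIntegral.norm_integral_le_integral_norm hu.1) _)
    _ ≤ ‖X 0 - Y 0‖ + ∫ s in 0..u, (‖a s - μ (Y s)‖ + K * ‖X s - Y s‖) := by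
        gcongr
        exact intervalIntegral.integral_mono_on hu.1 ((hμX.sub ha).norm.mono_set hsub)
          ((hg.add (hh.const_mul _)).mono_set hsub) fun s _ => hdrift s
    _ = ‖X 0 - Y 0‖ + (∫ s in 0..u, ‖a s - μ (Y s)‖) + K * ∫ s in 0..u, ‖X s - Y s‖ := by
        rw [intervalIntegral.integral_add (hg.mono_set hsub) ((hh.const_mul _).mono_set hsub),
          intervalIntegral.integral_const_mul, add_assoc]
    _ ≤ _ := by
        gcongr
        exact intervalIntegral.integral_mono_interval le_rfl hu.1 hu.2
          (ae_of_all _ fun s => norm_nonneg _) hg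

theorem norm_sub_le_mul_exp_of_eq_add_integral (hμ : LipschitzWith K μ)
    (hX : ContinuousOn X (Icc 0 t)) (hY : ContinuousOn Y (Icc 0 t))
    (ha : IntervalIntegrable a volume 0 t) (ht : 0 ≤ t)
    (heq : ∀ u ∈ Icc 0 t, X u - Y u = X 0 - Y 0 + ∫ s in 0..u, (μ (X s) - a s)) :
    ‖X t - Y t‖ ≤ (‖X 0 - Y 0‖ + ∫ s in 0..t, ‖a s - μ (Y s)‖) * exp (K * t) := by
  simpa using le_mul_exp_of_le_add_mul_integral K.coe_nonneg ht (hX.sub hY).norm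
    (norm_sub_le_add_integral_of_eq_add_integral hμ hX hY ha heq)

end Perturbation

theorem pathwise_perturbation_general (d : ℕ) (L T : ℝ) (hL : 0 ≤ L)
    (δ : ℝ) (hδ : 0 < δ) (p : ℝ) (hp : 2 ≤ p)
    (μd : EuclideanSpace ℝ (Fin d) → EuclideanSpace ℝ (Fin d))
    (hμ : ∀ v w, ‖μd v - μd w‖ ≤ L * ‖v - w‖)
    (X Y : ℝ → EuclideanSpace ℝ (Fin d))
    (hX : ContinuousOn X (Set.Icc 0 T)) (hY : ContinuousOn Y (Set.Icc 0 T))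
    (a : ℝ → EuclideanSpace ℝ (Fin d))
    (haInt : ∀ t ∈ Set.Icc (0:ℝ) T, IntervalIntegrable a volume 0 t)
    (heq : ∀ t ∈ Set.Icc (0:ℝ) T,
      X t - Y t = X 0 - Y 0 + ∫ s in (0:ℝ)..t, (μd (X s) - a s)) :
    ∀ t ∈ Set.Icc (0:ℝ) T,
      ENNReal.ofReal (‖X t - Y t‖ ^ p)
        ≤ ENNReal.ofReal (Real.exp ((L + (1 - 1 / p) / δ) * p * t)) *
          (ENNReal.ofReal (‖X 0 - Y 0‖ ^ p) +
            ENNReal.ofReal (δ ^ (p - 1)) *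
              ∫⁻ s in Set.Ioc (0:ℝ) t, ENNReal.ofReal (‖a s - μd (Y s)‖ ^ p)) := by
  intro t ht
  obtain rfl | ht₀ := ht.1.eq_or_lt
  · simp
  have hμ' : LipschitzWith ⟨L, hL⟩ μd := lipschitzWith_iff_norm_sub_le.2 hμ
  have hIcc : Icc 0 t ⊆ Icc 0 T := Icc_subset_Icc_right ht.2
  have hgron := norm_sub_le_mul_exp_of_eq_add_integral hμ' (hX.mono hIcc) (hY.mono hIcc)
    (haInt t ht) ht.1 fun u hu => heq u (hIcc hu)
  have hg : IntervalIntegrable (fun s => ‖a s - μd (Y s)‖) volume 0 t :=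
    ((haInt t ht).sub (((hμ'.continuous.comp_continuousOn hY).mono hIcc).intervalIntegrable_of_Icc
      ht.1)).norm
  have hholder := ofReal_rpow_intervalIntegral_le (p := p) ht.1 (by linarith) hg
    fun _ => norm_nonneg _
  rw [sub_zero] at hholder
  exact ofReal_rpow_le_exp_mul_of_le_add_mul_exp (by linarith) (norm_nonneg _) (norm_nonneg _)
    (intervalIntegral.integral_nonneg ht.1 fun _ _ => norm_nonneg _) ht₀ hδ hgron hholder

/-- Deterministic pathwise perturbation estimate (Lemma 4.4): if `μ` is `L`-Lipschitz,
`X, Y` are continuous on `[0,T]`, `a` is measurable and integrable on each `[0,t]`, and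
`X_t − Y_t = X_0 − Y_0 + ∫_0^t [μ(X_s) − a_s] ds` for all `t ∈ [0,T]`, then
`‖X_t − Y_t‖^p ≤ exp((L + (1 − 1/p)/δ) p t) (‖X_0 − Y_0‖^p + δ^(p−1) ∫_0^t ‖a_s − μ(Y_s)‖^p ds)`. -/
theorem pathwise_perturbation (d : ℕ) (L T : ℝ) (hL : 0 ≤ L) (hT : 0 ≤ T)
    (δ : ℝ) (hδ : 0 < δ) (p : ℝ) (hp : 2 ≤ p)
    (μd : EuclideanSpace ℝ (Fin d) → EuclideanSpace ℝ (Fin d))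
    (hμ : ∀ v w, ‖μd v - μd w‖ ≤ L * ‖v - w‖)
    (X Y : ℝ → EuclideanSpace ℝ (Fin d))
    (hX : ContinuousOn X (Set.Icc 0 T)) (hY : ContinuousOn Y (Set.Icc 0 T))
    (a : ℝ → EuclideanSpace ℝ (Fin d)) (ha : Measurable a)
    (haInt : ∀ t ∈ Set.Icc (0:ℝ) T, IntervalIntegrable a volume 0 t)
    (heq : ∀ t ∈ Set.Icc (0:ℝ) T,
      X t - Y t = X 0 - Y 0 + ∫ s in (0:ℝ)..t, (μd (X s) - a s)) :
    ∀ t ∈ Set.Icc (0:ℝ) T,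
      ENNReal.ofReal (‖X t - Y t‖ ^ p)
        ≤ ENNReal.ofReal (Real.exp ((L + (1 - 1 / p) / δ) * p * t)) *
          (ENNReal.ofReal (‖X 0 - Y 0‖ ^ p) +
            ENNReal.ofReal (δ ^ (p - 1)) *
              ∫⁻ s in Set.Ioc (0:ℝ) t, ENNReal.ofReal (‖a s - μd (Y s)‖ ^ p)) :=
  pathwise_perturbation_general d L T hL δ hδ p hp μd hμ X Y hX hY a haInt heq
end

section
/- Let d, m ∈ ℕ, ξ ∈ ℝ^d, p ∈ [1,∞), c, C, T ∈ [0,∞), B ∈ ℝ^{d×m}, let (Ω, F, P) be a probability space, let W : [0,T] × Ω → ℝ^m be a standard Brownian motion, let μ : ℝ^d → ℝ^d be measurable with ‖μ(x)‖ ≤ C + c‖x‖ for all x ∈ ℝ^d, let χ : [0,T] → [0,T] be measurable with χ(t) ≤ t for all t, and let X : [0,T] × Ω → ℝ^d be a continuous stochastic process satisfying X_t = ξ + ∫_0^t μ(X_{χ(s)}) ds + B W_t almost surely for each t ∈ [0,T]. Then sup_{t∈[0,T]} (E[‖X_t‖^p])^(1/p) ≤ (‖ξ‖ + C T + (E[‖B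 W_T‖^p])^(1/p)) e^{cT}. -/
/-!
Pathwise, `‖X_t‖ ≤ ‖ξ‖ + C t + ‖B W_t‖ + c ∫₀ᵗ ‖X_{χ(s)}‖ ds`. Take `Lᵖ(P)`-norms, using
Minkowski's integral inequality for the last term and Brownian scaling (`W_t` has the law of
`√(t/T) W_T`) for the noise. Since `χ(s) ≤ s`, the running supremum
`F(t) = sup_{u ≤ t} ‖X_u‖_{Lᵖ}` then satisfies `F(t) ≤ A + c ∫₀ᵗ F` with
`A = ‖ξ‖ + C T + ‖B W_T‖_{Lᵖ}`, and Gronwall gives `F(t) ≤ A e^{ct}`. Gronwall needs `F` finite,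
so the argument is run on the events `{sup_t ‖X_t‖ ≤ n}` and `n → ∞` by monotone convergence.
-/

open MeasureTheory ProbabilityTheory
open scoped ENNReal NNReal

/-- A standard Brownian motion with values in `ℝ^m` on the time interval `[0,T]`. -/
structure IsStdBrownianMotion {Ω : Type*} [MeasurableSpace Ω] (P : Measure Ω)
    (m : ℕ) (T : ℝ) (W : ℝ → Ω → (Fin m → ℝ)) : Prop where
  measurable : ∀ t, Measurable (W t)
  init : ∀ ω, W 0 ω = 0
  cont : ∀ ω, ContinuousOn (fun t => W t ω) (Set.Icc 0 T)
  incr_gaussian : ∀ s t : ℝ, 0 ≤ s → s ≤ t → t ≤ T → ∀ i : Fin m,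
    P.map (fun ω => W t ω i - W s ω i) = gaussianReal 0 (Real.toNNReal (t - s))
  indep_incr : ∀ (n : ℕ) (τ : ℕ → ℝ), Monotone τ → (∀ k, τ k ∈ Set.Icc (0:ℝ) T) →
    iIndepFun
      (fun q : Fin n × Fin m => fun ω => W (τ (q.1 + 1)) ω q.2 - W (τ q.1) ω q.2) P

open Set Real

theorem lintegral_Lp_lintegral_le {α Ω : Type*} [MeasurableSpace α] [MeasurableSpace Ω]
    {ν : Measure α} {μ : Measure Ω} [SFinite ν] [SFinite μ] {p : ℝ} (hp : 1 ≤ p)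
    {H : α → Ω → ℝ≥0∞} (hH : Measurable (Function.uncurry H))
    (hfin : ∫⁻ ω, (∫⁻ a, H a ω ∂ν) ^ p ∂μ ≠ ∞) :
    (∫⁻ ω, (∫⁻ a, H a ω ∂ν) ^ p ∂μ) ^ (1 / p) ≤ ∫⁻ a, (∫⁻ ω, H a ω ^ p ∂μ) ^ (1 / p) ∂ν := by
  have swap : ∀ K : α → Ω → ℝ≥0∞, Measurable (Function.uncurry K) →
      ∫⁻ ω, ∫⁻ a, K a ω ∂ν ∂μ = ∫⁻ a, ∫⁻ ω, K a ω ∂μ ∂ν := fun K hK =>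
    lintegral_lintegral_swap (hK.comp measurable_swap).aemeasurable
  rcases hp.eq_or_lt with rfl | hp1
  · simpa using (swap H hH).le
  have hHa : ∀ a, Measurable (H a) := fun a => hH.comp measurable_prodMk_left
  have hHω : ∀ ω, Measurable (H · ω) := fun ω => hH.comp measurable_prodMk_right
  set G : Ω → ℝ≥0∞ := fun ω => ∫⁻ a, H a ω ∂ν
  have hG : Measurable G := hH.lintegral_prod_left
  set I := ∫⁻ ω, G ω ^ p ∂μ
  have hpq : p.HolderConjugate (p / (p - 1)) := .conjExponent hp1
  set q := p / (p - 1)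
  rcases eq_or_ne I 0 with hI0 | hI0
  · rw [hI0, ENNReal.zero_rpow_of_pos (by positivity)]
    exact zero_le
  have hIq : I ^ (1 / q) ≠ ∞ := ENNReal.rpow_ne_top_of_nonneg (by positivity) hfin
  have hGq : ∀ ω, (G ω ^ (p - 1)) ^ q = G ω ^ p := fun ω => by
    rw [← ENNReal.rpow_mul, mul_div_cancel₀ _ (sub_ne_zero.2 hp1.ne')]
  -- Write `G ^ p = G * G ^ (p - 1)`, swap the integrals and apply Hölder in `ω` for each `a`.
  have key : I ≤ (∫⁻ a, (∫⁻ ω, H a ω ^ p ∂μ) ^ (1 / p) ∂ν) * I ^ (1 / q) := calc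
    I = ∫⁻ ω, ∫⁻ a, H a ω * G ω ^ (p - 1) ∂ν ∂μ := lintegral_congr fun ω => by
        rw [lintegral_mul_const'' _ (hHω ω).aemeasurable]
        conv_rhs => rw [← ENNReal.rpow_one (∫⁻ a, H a ω ∂ν)]
        rw [← ENNReal.rpow_add_of_nonneg _ _ zero_le_one (by linarith), add_sub_cancel]
    _ = ∫⁻ a, ∫⁻ ω, H a ω * G ω ^ (p - 1) ∂μ ∂ν :=
        swap _ (hH.mul ((hG.pow_const _).comp measurable_snd))
    _ ≤ ∫⁻ a, (∫⁻ ω, H a ω ^ p ∂μ) ^ (1 / p) * I ^ (1 / q) ∂ν := lintegral_mono fun a => by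
        have := ENNReal.lintegral_mul_le_Lp_mul_Lq μ hpq
          (hHa a).aemeasurable (hG.pow_const (p - 1)).aemeasurable
        simpa only [Pi.mul_apply, hGq] using this
    _ = _ := lintegral_mul_const' _ _ hIq
  have hsplit : I ^ (1 / p) * I ^ (1 / q) = I := by
    rw [← ENNReal.rpow_add _ _ hI0 hfin, one_div, one_div, hpq.inv_add_inv_eq_one,
      ENNReal.rpow_one]
  refine (ENNReal.mul_le_mul_iff_left ?_ hIq).1 (hsplit.trans_le key)
  simp [ENNReal.rpow_eq_zero_iff, hI0, hfin]

theorem le_mul_exp_of_le_add_mul_integral_s5 {F : ℝ → ℝ} {a c T : ℝ} (hF : Monotone F)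
    (hc : 0 ≤ c) (h : ∀ t ∈ Icc 0 T, F t ≤ a + c * ∫ s in (0)..t, F s) :
    ∀ t ∈ Icc 0 T, F t ≤ a * exp (c * t) := by
  set φ : ℝ → ℝ := fun t => a + c * ∫ s in (0)..t, F s
  have hφ : Continuous φ :=
    continuous_const.add <| continuous_const.mul <|
      intervalIntegral.continuous_primitive (fun _ _ => hF.intervalIntegrable) 0
  -- `φ` need not be differentiable, but its primitive `ψ` is, and `ψ' = c φ ≤ c ψ`.
  set ψ : ℝ → ℝ := fun t => a + c * ∫ s in (0)..t, φ s
  have hψ : ∀ t, HasDerivAt ψ (c * φ t) t := fun t =>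
    ((hφ.integral_hasStrictDerivAt 0 t).hasDerivAt.const_mul c).const_add a
  have hφψ : ∀ t ∈ Icc 0 T, φ t ≤ ψ t := fun t ht =>
    add_le_add_right (mul_le_mul_of_nonneg_left (intervalIntegral.integral_mono_on ht.1
      hF.intervalIntegrable (hφ.intervalIntegrable 0 t)
      fun s hs => h s ⟨hs.1, hs.2.trans ht.2⟩) hc) a
  have hψ_le := le_gronwallBound_of_liminf_deriv_right_le (f := ψ) (δ := a) (K := c) (ε := 0)
    (a := 0) (b := T)
    (fun t _ => (hψ t).continuousAt.continuousWithinAt)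
    (fun t _ r hr => ((hψ t).hasDerivWithinAt (s := Ici t)).liminf_right_slope_le hr)
    (by simp [ψ]) fun t ht => by simpa using mul_le_mul_of_nonneg_left (hφψ t ⟨ht.1, ht.2.le⟩) hc
  intro t ht
  simpa [gronwallBound_ε0] using (h t ht).trans ((hφψ t ht).trans (hψ_le t ht))

theorem le_mul_exp_of_le_add_mul_setLIntegral {F : ℝ → ℝ≥0∞} {a : ℝ≥0∞} {c T : ℝ}
    (hF : Monotone F) (hF_fin : ∀ t, F t ≠ ∞) (hc : 0 ≤ c)
    (h : ∀ t ∈ Icc 0 T, F t ≤ a + ENNReal.ofReal c * ∫⁻ s in Ioc 0 t, F s) :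
    ∀ t ∈ Icc 0 T, F t ≤ a * ENNReal.ofReal (exp (c * t)) := by
  intro t ht
  rcases eq_or_ne a ∞ with rfl | ha
  · rw [ENNReal.top_mul (ENNReal.ofReal_pos.2 (exp_pos _)).ne']
    exact le_top
  have hFr : Monotone fun s => (F s).toReal := fun s s' hs =>
    ENNReal.toReal_mono (hF_fin s') (hF hs)
  have hlint : ∀ t ∈ Icc (0 : ℝ) T,
      ∫⁻ s in Ioc 0 t, F s = ENNReal.ofReal (∫ s in (0)..t, (F s).toReal) := fun t ht => by
    rw [intervalIntegral.integral_of_le ht.1, ofReal_integral_eq_lintegral_ofReal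
      (hFr.intervalIntegrable (a := 0) (b := t)).1 (.of_forall fun _ => ENNReal.toReal_nonneg)]
    simp_rw [ENNReal.ofReal_toReal (hF_fin _)]
  have hint : ∀ t ∈ Icc (0 : ℝ) T, 0 ≤ ∫ s in (0)..t, (F s).toReal := fun t ht =>
    intervalIntegral.integral_nonneg ht.1 fun _ _ => ENNReal.toReal_nonneg
  have hreal := le_mul_exp_of_le_add_mul_integral_s5 (a := a.toReal) hFr hc fun t ht => by
    refine ENNReal.toReal_le_of_le_ofReal (by have := hint t ht; positivity) ((h t ht).trans_eq ?_)
    rw [hlint t ht, ENNReal.ofReal_add (by positivity) (mul_nonneg hc (hint t ht)),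
      ENNReal.ofReal_mul hc, ENNReal.ofReal_toReal ha]
  calc F t = ENNReal.ofReal (F t).toReal := (ENNReal.ofReal_toReal (hF_fin t)).symm
    _ ≤ ENNReal.ofReal (a.toReal * exp (c * t)) := ENNReal.ofReal_le_ofReal (hreal t ht)
    _ = a * ENNReal.ofReal (exp (c * t)) := by
      rw [ENNReal.ofReal_mul ENNReal.toReal_nonneg, ENNReal.ofReal_toReal ha]

theorem le_mul_exp_of_le_add_mul_setLIntegral_comp {g : ℝ → ℝ≥0∞} {a K : ℝ≥0∞} {χ : ℝ → ℝ}
    {c T : ℝ} (hK : K ≠ ∞) (hgK : ∀ t ∈ Icc 0 T, g t ≤ K) (hc : 0 ≤ c)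
    (hχ : ∀ t ∈ Icc 0 T, χ t ∈ Icc 0 t)
    (h : ∀ t ∈ Icc 0 T, g t ≤ a + ENNReal.ofReal c * ∫⁻ s in Ioc 0 t, g (χ s)) :
    ∀ t ∈ Icc 0 T, g t ≤ a * ENNReal.ofReal (exp (c * t)) := by
  -- Gronwall applies to the running supremum `G`, which is monotone and dominates `g ∘ χ`.
  set G : ℝ → ℝ≥0∞ := fun s => ⨆ u ∈ Icc 0 (min s T), g u
  have hG_mono : Monotone G := fun s s' hs =>
    biSup_mono fun u hu => ⟨hu.1, hu.2.trans (min_le_min_right T hs)⟩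
  have hG_fin : ∀ s, G s ≠ ∞ := fun s =>
    ne_top_of_le_ne_top hK (iSup₂_le fun u hu => hgK u ⟨hu.1, hu.2.trans (min_le_right _ _)⟩)
  have hg_le_G : ∀ t ∈ Icc 0 T, ∀ u ∈ Icc 0 t, g u ≤ G t := fun t ht u hu =>
    le_biSup g (by rwa [min_eq_left ht.2])
  refine fun t ht => (hg_le_G t ht t ⟨ht.1, le_rfl⟩).trans
    (le_mul_exp_of_le_add_mul_setLIntegral hG_mono hG_fin hc (fun t ht => ?_) t ht)
  refine iSup₂_le fun u hu => ?_
  rw [min_eq_left ht.2] at hu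
  have huT : u ∈ Icc 0 T := ⟨hu.1, hu.2.trans ht.2⟩
  refine (h u huT).trans (add_le_add le_rfl (mul_le_mul' le_rfl ?_))
  calc ∫⁻ s in Ioc 0 u, g (χ s) ≤ ∫⁻ s in Ioc 0 u, G s := setLIntegral_mono' measurableSet_Ioc
        fun s hs => hg_le_G s ⟨hs.1.le, hs.2.trans huT.2⟩ _ (hχ s ⟨hs.1.le, hs.2.trans huT.2⟩)
    _ ≤ ∫⁻ s in Ioc 0 t, G s := lintegral_mono_set (Ioc_subset_Ioc_right hu.2)

theorem lintegral_Lp_const_mul {α : Type*} [MeasurableSpace α] {μ : Measure α} {f : α → ℝ≥0∞}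
    (hf : AEMeasurable f μ) {p : ℝ} (hp : 0 < p) (k : ℝ≥0∞) :
    (∫⁻ a, (k * f a) ^ p ∂μ) ^ (1 / p) = k * (∫⁻ a, f a ^ p ∂μ) ^ (1 / p) := by
  simp_rw [ENNReal.mul_rpow_of_nonneg _ _ hp.le]
  rw [lintegral_const_mul'' _ (hf.pow_const p), ENNReal.mul_rpow_of_nonneg _ _ (by positivity),
    one_div, ENNReal.rpow_rpow_inv hp.ne']

theorem Lp_le_mul_exp_of_le_add_mul_setLIntegral_comp_of_ae_bdd {Ω : Type*} [MeasurableSpace Ω]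
    {ν : Measure Ω} [IsFiniteMeasure ν] {p c T : ℝ} (hp : 1 ≤ p) (hc : 0 ≤ c)
    {Z N : ℝ → Ω → ℝ≥0∞} {χ : ℝ → ℝ} {K b : ℝ≥0∞} (hK : K ≠ ∞)
    (hZ : Measurable (Function.uncurry Z)) (hχ_meas : Measurable χ)
    (hχ : ∀ t ∈ Icc 0 T, χ t ∈ Icc 0 t) (hZK : ∀ᵐ ω ∂ν, ∀ t ∈ Icc 0 T, Z t ω ≤ K)
    (hN : ∀ t ∈ Icc 0 T, AEMeasurable (N t) ν)
    (hNb : ∀ t ∈ Icc 0 T, (∫⁻ ω, N t ω ^ p ∂ν) ^ (1 / p) ≤ b)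
    (hZN : ∀ t ∈ Icc 0 T, ∀ᵐ ω ∂ν, Z t ω ≤ N t ω + ENNReal.ofReal c * ∫⁻ s in Ioc 0 t, Z (χ s) ω) :
    ∀ t ∈ Icc 0 T, (∫⁻ ω, Z t ω ^ p ∂ν) ^ (1 / p) ≤ b * ENNReal.ofReal (exp (c * t)) := by
  have hp0 : 0 < p := zero_lt_one.trans_le hp
  have hKν : (∫⁻ _, K ^ p ∂ν) ^ (1 / p) ≠ ∞ := by
    rw [lintegral_const]
    exact ENNReal.rpow_ne_top_of_nonneg (by positivity)
      (ENNReal.mul_ne_top (ENNReal.rpow_ne_top_of_nonneg hp0.le hK) (measure_ne_top _ _))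
  refine le_mul_exp_of_le_add_mul_setLIntegral_comp hKν (fun t ht => ?_) hc hχ fun t ht => ?_
  · refine ENNReal.rpow_le_rpow (lintegral_mono_ae ?_) (by positivity)
    filter_upwards [hZK] with ω hω using ENNReal.rpow_le_rpow (hω t ht) hp0.le
  have hsub : ∀ s ∈ Ioc 0 t, χ s ∈ Icc 0 T := fun s hs =>
    have := hχ s ⟨hs.1.le, hs.2.trans ht.2⟩
    ⟨this.1, this.2.trans (hs.2.trans ht.2)⟩
  set I : Ω → ℝ≥0∞ := fun ω => ∫⁻ s in Ioc 0 t, Z (χ s) ω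
  have hH : Measurable (Function.uncurry fun s ω => Z (χ s) ω) :=
    hZ.comp ((hχ_meas.comp measurable_fst).prodMk measurable_snd)
  have hI_fin : ∫⁻ ω, I ω ^ p ∂ν ≠ ∞ := by
    refine ne_top_of_le_ne_top (b := ∫⁻ _, (K * volume (Ioc 0 t)) ^ p ∂ν) ?_ (lintegral_mono_ae ?_)
    · rw [lintegral_const]
      exact ENNReal.mul_ne_top (ENNReal.rpow_ne_top_of_nonneg hp0.le
        (ENNReal.mul_ne_top hK measure_Ioc_lt_top.ne)) (measure_ne_top _ _)
    filter_upwards [hZK] with ω hω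
    refine ENNReal.rpow_le_rpow ?_ hp0.le
    rw [← setLIntegral_const]
    exact setLIntegral_mono' measurableSet_Ioc fun s hs => hω _ (hsub s hs)
  calc (∫⁻ ω, Z t ω ^ p ∂ν) ^ (1 / p)
      ≤ (∫⁻ ω, (N t + fun ω => ENNReal.ofReal c * I ω) ω ^ p ∂ν) ^ (1 / p) := by
        refine ENNReal.rpow_le_rpow (lintegral_mono_ae ?_) (by positivity)
        filter_upwards [hZN t ht] with ω hω using ENNReal.rpow_le_rpow hω hp0.le
    _ ≤ (∫⁻ ω, N t ω ^ p ∂ν) ^ (1 / p) + ENNReal.ofReal c * (∫⁻ ω, I ω ^ p ∂ν) ^ (1 / p) := by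
        rw [← lintegral_Lp_const_mul hH.lintegral_prod_left.aemeasurable hp0]
        exact ENNReal.lintegral_Lp_add_le (hN t ht)
          (hH.lintegral_prod_left.const_mul _).aemeasurable hp
    _ ≤ b + ENNReal.ofReal c * ∫⁻ s in Ioc 0 t, (∫⁻ ω, Z (χ s) ω ^ p ∂ν) ^ (1 / p) :=
        add_le_add (hNb t ht) (mul_le_mul' le_rfl (lintegral_Lp_lintegral_le hp hH hI_fin))

theorem measurableSet_setOf_forall_mem {Ω E : Type*} [MeasurableSpace Ω] [TopologicalSpace E]
    [MeasurableSpace E] [OpensMeasurableSpace E] {X : ℝ → Ω → E}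
    (hX : ∀ ω, Continuous (X · ω)) (hXm : ∀ t, Measurable (X t)) {K : Set E} (hK : IsClosed K) :
    MeasurableSet {ω | ∀ t, X t ω ∈ K} := by
  have : {ω | ∀ t, X t ω ∈ K} = ⋂ q : ℚ, X q ⁻¹' K := by
    ext ω
    simp only [mem_ofPred_eq, mem_iInter, mem_preimage]
    exact ⟨fun h q => h q, fun h t => Rat.denseRange_cast.induction_on t (hK.preimage (hX ω)) h⟩
  rw [this]
  exact .iInter fun q => hXm q hK.measurableSet

theorem Lp_le_mul_exp_of_le_add_mul_setLIntegral_comp_of_continuous {Ω E : Type*}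
    [MeasurableSpace Ω] [NormedAddCommGroup E] [MeasurableSpace E] [BorelSpace E]
    {μ : Measure Ω} [IsFiniteMeasure μ] {p c T : ℝ} (hp : 1 ≤ p) (hc : 0 ≤ c) {Y : ℝ → Ω → E}
    (hY_cont : ∀ ω, Continuous (Y · ω)) (hY_meas : ∀ t, Measurable (Y t))
    (hY_bdd : ∀ ω, BddAbove (range fun t => ‖Y t ω‖)) {χ : ℝ → ℝ} (hχ_meas : Measurable χ)
    (hχ : ∀ t ∈ Icc 0 T, χ t ∈ Icc 0 t) {N : ℝ → Ω → ℝ≥0∞} {b : ℝ≥0∞}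
    (hN : ∀ t ∈ Icc 0 T, AEMeasurable (N t) μ)
    (hNb : ∀ t ∈ Icc 0 T, (∫⁻ ω, N t ω ^ p ∂μ) ^ (1 / p) ≤ b)
    (hYN : ∀ t ∈ Icc 0 T, ∀ᵐ ω ∂μ,
      ‖Y t ω‖ₑ ≤ N t ω + ENNReal.ofReal c * ∫⁻ s in Ioc 0 t, ‖Y (χ s) ω‖ₑ) :
    ∀ t ∈ Icc 0 T, (∫⁻ ω, ‖Y t ω‖ₑ ^ p ∂μ) ^ (1 / p) ≤ b * ENNReal.ofReal (exp (c * t)) := by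
  intro t ht
  set O : ℕ → Set Ω := fun n => {ω | ∀ u, ‖Y u ω‖ₑ ≤ n}
  have hO_meas : ∀ n, MeasurableSet (O n) := fun n =>
    measurableSet_setOf_forall_mem (K := {x | ‖x‖ₑ ≤ n}) hY_cont hY_meas
      (isClosed_le continuous_enorm continuous_const)
  have hO_mono : Monotone O := fun n n' h ω hω u => (hω u).trans (by exact_mod_cast h)
  have hO_cover : ⋃ n, O n = univ := by
    refine eq_univ_of_forall fun ω => mem_iUnion.2 ?_
    obtain ⟨R, hR⟩ := hY_bdd ω
    refine ⟨⌈R⌉₊, fun u => ?_⟩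
    rw [← ofReal_norm, ← ENNReal.ofReal_natCast]
    exact ENNReal.ofReal_le_ofReal ((hR (mem_range_self u)).trans (Nat.le_ceil R))
  have hn : ∀ n : ℕ, (∫⁻ ω in O n, ‖Y t ω‖ₑ ^ p ∂μ) ^ (1 / p) ≤
      b * ENNReal.ofReal (exp (c * t)) := fun n =>
    Lp_le_mul_exp_of_le_add_mul_setLIntegral_comp_of_ae_bdd (K := n) hp hc
      (ENNReal.natCast_ne_top n)
      (measurable_uncurry_of_continuous_of_measurable hY_cont hY_meas).enorm hχ_meas hχ
      (ae_restrict_of_forall_mem (hO_meas n) fun ω hω u _ => hω u)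
      (fun u hu => (hN u hu).restrict)
      (fun u hu => (ENNReal.rpow_le_rpow (setLIntegral_le_lintegral _ _)
        (by positivity)).trans (hNb u hu))
      (fun u hu => ae_restrict_of_ae (hYN u hu)) t ht
  rw [← setLIntegral_univ, ← hO_cover, setLIntegral_iUnion_of_directed _ hO_mono.directed_le]
  exact ((ENNReal.orderIsoRpow (1 / p) (by positivity)).map_iSup _).trans_le (iSup_le hn)

theorem Lp_le_mul_exp_of_le_add_mul_setLIntegral_comp_of_continuousOn {Ω E : Type*}
    [MeasurableSpace Ω] [NormedAddCommGroup E] [MeasurableSpace E] [BorelSpace E]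
    {μ : Measure Ω} [IsFiniteMeasure μ] {p c T : ℝ} (hp : 1 ≤ p) (hc : 0 ≤ c) {X : ℝ → Ω → E}
    (hX_cont : ∀ ω, ContinuousOn (X · ω) (Icc 0 T)) (hX_meas : ∀ t, Measurable (X t))
    {χ : ℝ → ℝ} (hχ_meas : Measurable χ) (hχ : ∀ t ∈ Icc 0 T, χ t ∈ Icc 0 t)
    {N : ℝ → Ω → ℝ≥0∞} {b : ℝ≥0∞} (hN : ∀ t ∈ Icc 0 T, AEMeasurable (N t) μ)
    (hNb : ∀ t ∈ Icc 0 T, (∫⁻ ω, N t ω ^ p ∂μ) ^ (1 / p) ≤ b)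
    (hXN : ∀ t ∈ Icc 0 T, ∀ᵐ ω ∂μ,
      ‖X t ω‖ₑ ≤ N t ω + ENNReal.ofReal c * ∫⁻ s in Ioc 0 t, ‖X (χ s) ω‖ₑ) :
    ∀ t ∈ Icc 0 T, (∫⁻ ω, ‖X t ω‖ₑ ^ p ∂μ) ^ (1 / p) ≤ b * ENNReal.ofReal (exp (c * t)) := by
  intro t ht
  have hT : 0 ≤ T := ht.1.trans ht.2
  -- `Y` extends the paths of `X` continuously to `ℝ`, which makes it jointly measurable.
  set Y : ℝ → Ω → E := fun u => X (projIcc 0 T hT u)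
  have hY : ∀ u ∈ Icc 0 T, Y u = X u := fun u hu => by simp [Y, projIcc_of_mem hT hu]
  have hY_cont : ∀ ω, Continuous (Y · ω) := fun ω =>
    (hX_cont ω).comp_continuous continuous_projIcc.subtype_val fun u => (projIcc 0 T hT u).2
  have hY_bdd : ∀ ω, BddAbove (range fun u => ‖Y u ω‖) := fun ω =>
    .mono (range_subset_iff.2 fun u => mem_image_of_mem (‖X · ω‖) (projIcc 0 T hT u).2)
      (isCompact_Icc.image_of_continuousOn (hX_cont ω).norm).bddAbove
  have hYN : ∀ u ∈ Icc 0 T, ∀ᵐ ω ∂μ,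
      ‖Y u ω‖ₑ ≤ N u ω + ENNReal.ofReal c * ∫⁻ s in Ioc 0 u, ‖Y (χ s) ω‖ₑ := fun u hu => by
    filter_upwards [hXN u hu] with ω hω
    rwa [hY u hu, setLIntegral_congr_fun measurableSet_Ioc fun s hs => by
      have hχs := hχ s ⟨hs.1.le, hs.2.trans hu.2⟩
      rw [hY _ ⟨hχs.1, hχs.2.trans (hs.2.trans hu.2)⟩]]
  have := Lp_le_mul_exp_of_le_add_mul_setLIntegral_comp_of_continuous hp hc hY_cont
    (fun u => hX_meas _) hY_bdd hχ_meas hχ hN hNb hYN t ht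
  rwa [hY t ht] at this

theorem map_const_smul_pi_gaussianReal {ι : Type*} [Fintype ι] (a : ℝ) (v : ℝ≥0) :
    (Measure.pi fun _ : ι => gaussianReal 0 v).map (a • ·) =
      Measure.pi fun _ => gaussianReal 0 (.mk (a ^ 2) (sq_nonneg a) * v) := by
  have : (a • · : (ι → ℝ) → ι → ℝ) = fun x i => a * x i := rfl
  rw [this, Measure.pi_map_pi (f := fun _ y => a * y)
    fun _ => (measurable_const_mul a).aemeasurable]
  simp [gaussianReal_map_const_mul]

namespace IsStdBrownianMotion

variable {Ω : Type*} [MeasurableSpace Ω] {P : Measure Ω} [IsProbabilityMeasure P] {m : ℕ} {T : ℝ}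
  {W : ℝ → Ω → (Fin m → ℝ)}

theorem map_eq_pi (hW : IsStdBrownianMotion P m T W) {t : ℝ} (ht : t ∈ Icc 0 T) :
    P.map (W t) = Measure.pi fun _ => gaussianReal 0 t.toNNReal := by
  have hcoord : ∀ i, Measurable fun ω => W t ω i := fun i =>
    (measurable_pi_apply i).comp (hW.measurable t)
  have hτ_mono : Monotone fun k : ℕ => if k = 0 then 0 else t := fun k l hkl => by
    dsimp only; split_ifs <;> first | rfl | exact ht.1 | omega
  have hτ_mem : ∀ k : ℕ, (if k = 0 then 0 else t) ∈ Icc 0 T := fun k => by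
    split_ifs
    exacts [left_mem_Icc.2 (ht.1.trans ht.2), ht]
  have hindep : iIndepFun (fun i ω => W t ω i) P := by
    simpa [hW.init] using (hW.indep_incr 1 _ hτ_mono hτ_mem).precomp
      (g := fun i : Fin m => ((0 : Fin 1), i)) fun i j h => (Prod.mk.inj h).2
  rw [(iIndepFun_iff_map_fun_eq_pi_map fun i => (hcoord i).aemeasurable).1 hindep]
  congr with i : 1
  simpa [hW.init] using hW.incr_gaussian 0 t le_rfl ht.1 ht.2 i

/-- Brownian scaling: `W t` has the law of `√(t / T) • W T`. -/
theorem lintegral_comp_le_of_smul_le (hW : IsStdBrownianMotion P m T W) {t : ℝ}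
    (ht : t ∈ Icc 0 T) {f : (Fin m → ℝ) → ℝ≥0∞} (hf : Measurable f)
    (hf_smul : ∀ a ∈ Icc (0 : ℝ) 1, ∀ x, f (a • x) ≤ f x) :
    ∫⁻ ω, f (W t ω) ∂P ≤ ∫⁻ ω, f (W T ω) ∂P := by
  have hT : 0 ≤ T := ht.1.trans ht.2
  rcases hT.eq_or_lt with rfl | hT
  · rw [le_antisymm ht.2 ht.1]
  set a := √(t / T)
  have ha : a ∈ Icc (0 : ℝ) 1 :=
    ⟨sqrt_nonneg _, sqrt_le_one.2 ((div_le_one hT).2 ht.2)⟩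
  have hvar : (.mk (a ^ 2) (sq_nonneg a) * T.toNNReal : ℝ≥0) = t.toNNReal := by
    ext
    simp only [NNReal.coe_mul, NNReal.coe_mk, a, sq_sqrt (div_nonneg ht.1 hT.le),
      div_mul_cancel₀ _ hT.ne', Real.coe_toNNReal _ hT.le, Real.coe_toNNReal _ ht.1]
  have hlaw : P.map (W t) = (P.map (W T)).map (a • ·) := by
    rw [hW.map_eq_pi ht, hW.map_eq_pi (right_mem_Icc.2 hT.le), map_const_smul_pi_gaussianReal, hvar]
  calc ∫⁻ ω, f (W t ω) ∂P = ∫⁻ x, f (a • x) ∂P.map (W T) := by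
        rw [← lintegral_map hf (hW.measurable t), hlaw,
          lintegral_map hf (measurable_const_smul a)]
    _ ≤ ∫⁻ x, f x ∂P.map (W T) := lintegral_mono (hf_smul a ha)
    _ = ∫⁻ ω, f (W T ω) ∂P := lintegral_map hf (hW.measurable T)

theorem Lp_const_add_le {E : Type*} [NormedAddCommGroup E] [NormedSpace ℝ E]
    (hW : IsStdBrownianMotion P m T W) {t : ℝ} (ht : t ∈ Icc 0 T) {p : ℝ} (hp : 1 ≤ p)
    (L : (Fin m → ℝ) →ₗ[ℝ] E) (k : ℝ≥0∞) :
    (∫⁻ ω, (k + ‖L (W t ω)‖ₑ) ^ p ∂P) ^ (1 / p) ≤ k + (∫⁻ ω, ‖L (W T ω)‖ₑ ^ p ∂P) ^ (1 / p) := by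
  have hp0 : 0 < p := zero_lt_one.trans_le hp
  have hL : Measurable fun x => ‖L x‖ₑ := L.continuous_of_finiteDimensional.enorm.measurable
  have hnoise : ∫⁻ ω, ‖L (W t ω)‖ₑ ^ p ∂P ≤ ∫⁻ ω, ‖L (W T ω)‖ₑ ^ p ∂P :=
    hW.lintegral_comp_le_of_smul_le ht (hL.pow_const p) fun a ha x => by
      rw [map_smul, enorm_smul, ENNReal.mul_rpow_of_nonneg _ _ hp0.le]
      refine mul_le_of_le_one_left' (ENNReal.rpow_le_one ?_ hp0.le)
      simpa [Real.enorm_eq_ofReal ha.1] using ha.2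
  calc (∫⁻ ω, (k + ‖L (W t ω)‖ₑ) ^ p ∂P) ^ (1 / p)
      ≤ (∫⁻ _, k ^ p ∂P) ^ (1 / p) + (∫⁻ ω, ‖L (W t ω)‖ₑ ^ p ∂P) ^ (1 / p) :=
        ENNReal.lintegral_Lp_add_le aemeasurable_const
          (hL.comp (hW.measurable t)).aemeasurable hp
    _ ≤ k + (∫⁻ ω, ‖L (W T ω)‖ₑ ^ p ∂P) ^ (1 / p) := by
        rw [lintegral_const, measure_univ, mul_one, ← ENNReal.rpow_mul, mul_one_div_cancel hp0.ne',
          ENNReal.rpow_one]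
        gcongr

end IsStdBrownianMotion

theorem enorm_intervalIntegral_le_of_norm_le {E F : Type*} [NormedAddCommGroup E]
    [NormedSpace ℝ E] [NormedAddCommGroup F] {f : ℝ → E} {g : ℝ → F} {C c t : ℝ} (ht : 0 ≤ t)
    (hfg : ∀ s ∈ Ioc 0 t, ‖f s‖ ≤ C + c * ‖g s‖) :
    ‖∫ s in (0)..t, f s‖ₑ ≤
      ENNReal.ofReal (C * t) + ENNReal.ofReal c * ∫⁻ s in Ioc 0 t, ‖g s‖ₑ := calc
  ‖∫ s in (0)..t, f s‖ₑ ≤ ∫⁻ s in Ioc 0 t, ‖f s‖ₑ := by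
      rw [intervalIntegral.integral_of_le ht]
      exact enorm_integral_le_lintegral_enorm _
  _ ≤ ∫⁻ s in Ioc 0 t, (ENNReal.ofReal C + ENNReal.ofReal c * ‖g s‖ₑ) :=
      setLIntegral_mono' measurableSet_Ioc fun s hs => by
        rw [← ofReal_norm, ← ofReal_norm, ← ENNReal.ofReal_mul' (norm_nonneg _)]
        exact (ENNReal.ofReal_le_ofReal (hfg s hs)).trans ENNReal.ofReal_add_le
  _ = _ := by
      rw [lintegral_add_left measurable_const, setLIntegral_const, Real.volume_Ioc, sub_zero,
        ← ENNReal.ofReal_mul' ht, lintegral_const_mul' _ _ ENNReal.ofReal_ne_top]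

theorem enorm_le_of_eq_add_intervalIntegral_add {E : Type*} [NormedAddCommGroup E]
    [NormedSpace ℝ E] {f : E → E} {C c t : ℝ} (ht : 0 ≤ t) (hf : ∀ x, ‖f x‖ ≤ C + c * ‖x‖)
    {x ξ w : E} {y : ℝ → E} (hx : x = ξ + (∫ s in (0)..t, f (y s)) + w) :
    ‖x‖ₑ ≤ ‖ξ‖ₑ + ENNReal.ofReal (C * t) + ‖w‖ₑ + ENNReal.ofReal c * ∫⁻ s in Ioc 0 t, ‖y s‖ₑ := calc
  ‖x‖ₑ ≤ ‖ξ‖ₑ + ‖∫ s in (0)..t, f (y s)‖ₑ + ‖w‖ₑ := by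
      rw [hx]
      exact (enorm_add_le _ _).trans (add_le_add_left (enorm_add_le _ _) _)
  _ ≤ ‖ξ‖ₑ + (ENNReal.ofReal (C * t) + ENNReal.ofReal c * ∫⁻ s in Ioc 0 t, ‖y s‖ₑ) + ‖w‖ₑ := by
      gcongr
      exact enorm_intervalIntegral_le_of_norm_le ht fun s _ => hf _
  _ = _ := by ring

theorem sde_apriori_lp_bound_general {Ω : Type*} [MeasurableSpace Ω] (P : Measure Ω)
    [IsProbabilityMeasure P] (d m : ℕ) (ξ : EuclideanSpace ℝ (Fin d))
    (p : ℝ) (hp : 1 ≤ p) (c C T : ℝ) (hc : 0 ≤ c) (hC : 0 ≤ C)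
    (B : Matrix (Fin d) (Fin m) ℝ) (W : ℝ → Ω → (Fin m → ℝ))
    (hW : IsStdBrownianMotion P m T W)
    (μd : EuclideanSpace ℝ (Fin d) → EuclideanSpace ℝ (Fin d))
    (hμgrowth : ∀ x, ‖μd x‖ ≤ C + c * ‖x‖)
    (χ : ℝ → ℝ) (hχmeas : Measurable χ)
    (hχ : ∀ t ∈ Set.Icc (0:ℝ) T, χ t ∈ Set.Icc (0:ℝ) t)
    (X : ℝ → Ω → EuclideanSpace ℝ (Fin d))
    (hXmeas : ∀ t, Measurable (X t))
    (hXcont : ∀ ω, ContinuousOn (fun t => X t ω) (Set.Icc 0 T))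
    (hX : ∀ t ∈ Set.Icc (0:ℝ) T, ∀ᵐ ω ∂P,
      X t ω = ξ + (∫ s in (0:ℝ)..t, μd (X (χ s) ω))
        + (EuclideanSpace.equiv (Fin d) ℝ).symm (B.mulVec (W t ω))) :
    ∀ t ∈ Set.Icc (0:ℝ) T,
      (∫⁻ ω, (‖X t ω‖₊ : ℝ≥0∞) ^ p ∂P) ^ (1 / p)
        ≤ (ENNReal.ofReal ‖ξ‖ + ENNReal.ofReal (C * T) +
            (∫⁻ ω, (‖(EuclideanSpace.equiv (Fin d) ℝ).symm (B.mulVec (W T ω))‖₊ : ℝ≥0∞) ^ p ∂P)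
              ^ (1 / p)) * ENNReal.ofReal (Real.exp (c * T)) := by
  intro t ht
  set L : (Fin m → ℝ) →ₗ[ℝ] EuclideanSpace ℝ (Fin d) :=
    (EuclideanSpace.equiv (Fin d) ℝ).symm.toLinearMap ∘ₗ B.mulVecLin
  set A := ENNReal.ofReal ‖ξ‖ + ENNReal.ofReal (C * T)
  have hpath : ∀ u ∈ Icc 0 T, ∀ᵐ ω ∂P,
      ‖X u ω‖ₑ ≤ A + ‖L (W u ω)‖ₑ + ENNReal.ofReal c * ∫⁻ s in Ioc 0 u, ‖X (χ s) ω‖ₑ := by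
    intro u hu
    filter_upwards [hX u hu] with ω hω
    refine (enorm_le_of_eq_add_intervalIntegral_add (w := L (W u ω)) hu.1 hμgrowth hω).trans ?_
    rw [← ofReal_norm]
    show _ ≤ ENNReal.ofReal ‖ξ‖ + ENNReal.ofReal (C * T) + _ + _
    gcongr
    exact hu.2
  have hN : ∀ u ∈ Icc 0 T, AEMeasurable (fun ω => A + ‖L (W u ω)‖ₑ) P := fun u _ =>
    (measurable_const.add
      (L.continuous_of_finiteDimensional.enorm.measurable.comp (hW.measurable u))).aemeasurable
  have hbound := Lp_le_mul_exp_of_le_add_mul_setLIntegral_comp_of_continuousOn hp hc hXcont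
    hXmeas hχmeas hχ hN (fun u hu => hW.Lp_const_add_le hu hp L A) hpath t ht
  exact hbound.trans (mul_le_mul' le_rfl
    (ENNReal.ofReal_le_ofReal (exp_le_exp.2 (mul_le_mul_of_nonneg_left ht.2 hc))))

/-- A priori `L^p` bound for solutions of SDEs with linearly growing drift, additive
noise, and a time-discretization function `χ` with `χ(t) ≤ t` (Lemma 4.1):
`sup_{t∈[0,T]} (E[‖X_t‖^p])^(1/p) ≤ (‖ξ‖ + C T + (E[‖B W_T‖^p])^(1/p)) e^{cT}`. -/
theorem sde_apriori_lp_bound {Ω : Type*} [MeasurableSpace Ω] (P : Measure Ω)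
    [IsProbabilityMeasure P] (d m : ℕ) (ξ : EuclideanSpace ℝ (Fin d))
    (p : ℝ) (hp : 1 ≤ p) (c C T : ℝ) (hc : 0 ≤ c) (hC : 0 ≤ C) (hT : 0 ≤ T)
    (B : Matrix (Fin d) (Fin m) ℝ) (W : ℝ → Ω → (Fin m → ℝ))
    (hW : IsStdBrownianMotion P m T W)
    (μd : EuclideanSpace ℝ (Fin d) → EuclideanSpace ℝ (Fin d)) (hμmeas : Measurable μd)
    (hμgrowth : ∀ x, ‖μd x‖ ≤ C + c * ‖x‖)
    (χ : ℝ → ℝ) (hχmeas : Measurable χ)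
    (hχ : ∀ t ∈ Set.Icc (0:ℝ) T, χ t ∈ Set.Icc (0:ℝ) t)
    (X : ℝ → Ω → EuclideanSpace ℝ (Fin d))
    (hXmeas : ∀ t, Measurable (X t))
    (hXcont : ∀ ω, ContinuousOn (fun t => X t ω) (Set.Icc 0 T))
    (hX : ∀ t ∈ Set.Icc (0:ℝ) T, ∀ᵐ ω ∂P,
      X t ω = ξ + (∫ s in (0:ℝ)..t, μd (X (χ s) ω))
        + (EuclideanSpace.equiv (Fin d) ℝ).symm (B.mulVec (W t ω))) :
    ∀ t ∈ Set.Icc (0:ℝ) T,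
      (∫⁻ ω, (‖X t ω‖₊ : ℝ≥0∞) ^ p ∂P) ^ (1 / p)
        ≤ (ENNReal.ofReal ‖ξ‖ + ENNReal.ofReal (C * T) +
            (∫⁻ ω, (‖(EuclideanSpace.equiv (Fin d) ℝ).symm (B.mulVec (W T ω))‖₊ : ℝ≥0∞) ^ p ∂P)
              ^ (1 / p)) * ENNReal.ofReal (Real.exp (c * T)) :=
  sde_apriori_lp_bound_general P d m ξ p hp c C T hc hC B W hW μd hμgrowth χ hχmeas hχ X hXmeas
    hXcont hX
end

section
/- Let 𝐚 : ℝ → ℝ be continuous and for each n ∈ ℕ let 𝐀_n : ℝ^n → ℝ^n apply 𝐚 componentwise. Let 𝕃 ∈ {2,3,4,...}, M ∈ ℕ, layer dimensions 𝔏_0, ..., 𝔏_𝕃 ∈ ℕ, scalars h_1, ..., h_M ∈ ℝ, and let φ_1, ..., φ_M be neural networks all with architecture (𝔏_0, ..., 𝔏_𝕃), i.e. φ_i ∈ ×_{n=1}^{𝕃} (ℝ^{𝔏_n × 𝔏_{n−1}} × ℝ^{𝔏_n}). Then there exists a neural network ψ such that its realization satisfies (R ψ)(x) = Σ_{m=1}^M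 h_m (R φ_m)(x) for all x ∈ ℝ^{𝔏_0}, and the number of parameters satisfies P(ψ) ≤ M² P(φ_1). -/
/-- A fully-connected neural network with architecture `(l 0, l 1, ..., l L)`. -/
structure NeuralNet (l : ℕ → ℕ) (L : ℕ) where
  W : ∀ i : ℕ, Matrix (Fin (l (i + 1))) (Fin (l i)) ℝ
  B : ∀ i : ℕ, Fin (l (i + 1)) → ℝ

namespace NeuralNet

/-- Apply the activation function componentwise, except before the input layer. -/
def act (a : ℝ → ℝ) : ℕ → ∀ {k : ℕ}, (Fin k → ℝ) → (Fin k → ℝ)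
  | 0, _, v => v
  | _ + 1, _, v => fun j => a (v j)

/-- Value of the `n`-th layer before activation (affine output of layer `n`). -/
def pre (a : ℝ → ℝ) {l : ℕ → ℕ} {L : ℕ} (Φ : NeuralNet l L) :
    (n : ℕ) → (Fin (l 0) → ℝ) → (Fin (l n) → ℝ)
  | 0, x => x
  | n + 1, x => fun j => (Φ.W n).mulVec (act a n (pre a Φ n x)) j + Φ.B n j

/-- The realization of a neural network with activation `a`. -/
def realize (a : ℝ → ℝ) {l : ℕ → ℕ} {L : ℕ} (Φ : NeuralNet l L) :
    (Fin (l 0) → ℝ) → (Fin (l L) → ℝ) := pre a Φ L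

/-- The number of parameters of a network with architecture `(l 0, ..., l L)`. -/
def params (l : ℕ → ℕ) (L : ℕ) : ℕ := ∑ n ∈ Finset.range L, l (n + 1) * (l n + 1)

end NeuralNet

open NeuralNet

namespace SumNN

lemma act_zero (a : ℝ → ℝ) {m : ℕ} (v : Fin m → ℝ) : act a 0 v = v := rfl

lemma act_succ (a : ℝ → ℝ) (n : ℕ) {m : ℕ} (v : Fin m → ℝ) :
    act a (n + 1) v = fun j => a (v j) := rfl

lemma pre_zero (a : ℝ → ℝ) {l : ℕ → ℕ} {L : ℕ} (Φ : NeuralNet l L) (x : Fin (l 0) → ℝ) :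
    pre a Φ 0 x = x := rfl

lemma pre_succ (a : ℝ → ℝ) {l : ℕ → ℕ} {L : ℕ} (Φ : NeuralNet l L) (n : ℕ)
    (x : Fin (l 0) → ℝ) (j : Fin (l (n + 1))) :
    pre a Φ (n + 1) x j = (Φ.W n).mulVec (act a n (pre a Φ n x)) j + Φ.B n j := rfl

variable {M : ℕ} (k : ℕ) (𝔏 : ℕ → ℕ)

/-- Architecture of the stacked network. -/
def lp (k M : ℕ) (𝔏 : ℕ → ℕ) (n : ℕ) : ℕ :=
  if n = 0 then 𝔏 0 else if n < k + 2 then M * 𝔏 n else 𝔏 (k + 2)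

lemma lp_zero (k M : ℕ) (𝔏 : ℕ → ℕ) : lp k M 𝔏 0 = 𝔏 0 := by simp [lp]

lemma lp_mid (k M : ℕ) (𝔏 : ℕ → ℕ) {n : ℕ} (hn : 0 < n) (hn' : n < k + 2) :
    lp k M 𝔏 n = M * 𝔏 n := by simp [lp, hn.ne', hn']

lemma lp_last (k M : ℕ) (𝔏 : ℕ → ℕ) : lp k M 𝔏 (k + 2) = 𝔏 (k + 2) := by simp [lp]

/-- Decoding of a hidden-layer index into (block, within-block) indices. -/
def emid (k M : ℕ) (𝔏 : ℕ → ℕ) (n : ℕ) (hn : 0 < n) (hn' : n < k + 2) :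
    Fin (lp k M 𝔏 n) ≃ Fin M × Fin (𝔏 n) :=
  (finCongr (lp_mid k M 𝔏 hn hn')).trans finProdFinEquiv.symm

lemma sum_emid {α : Type*} [AddCommMonoid α] {N m K : ℕ} (e : Fin N ≃ Fin m × Fin K)
    (f : Fin N → α) :
    ∑ c : Fin N, f c = ∑ p : Fin m, ∑ q : Fin K, f (e.symm (p, q)) := by
  rw [← Equiv.sum_comp e.symm f, Fintype.sum_prod_type]

variable (h : Fin M → ℝ) (φ : Fin M → NeuralNet 𝔏 (k + 2))

def Wψ : ∀ i, Matrix (Fin (lp k M 𝔏 (i + 1))) (Fin (lp k M 𝔏 i)) ℝ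
  | 0 => Matrix.of fun r c =>
      (φ (emid k M 𝔏 1 one_pos (by omega) r).1).W 0
        ((emid k M 𝔏 1 one_pos (by omega) r).2) (Fin.cast (lp_zero k M 𝔏) c)
  | (i + 1) =>
      if hlt : i + 2 < k + 2 then
        Matrix.of fun r c =>
          if (emid k M 𝔏 (i + 2) (by omega) hlt r).1
              = (emid k M 𝔏 (i + 1) (by omega) (by omega) c).1 then
            (φ (emid k M 𝔏 (i + 2) (by omega) hlt r).1).W (i + 1)
              ((emid k M 𝔏 (i + 2) (by omega) hlt r).2)
              ((emid k M 𝔏 (i + 1) (by omega) (by omega) c).2)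
          else 0
      else if heq : i + 2 = k + 2 then
        Matrix.of fun r c =>
          h (emid k M 𝔏 (i + 1) (by omega) (by omega) c).1 *
            (φ (emid k M 𝔏 (i + 1) (by omega) (by omega) c).1).W (i + 1)
              (Fin.cast (by simp [lp, heq]) r)
              ((emid k M 𝔏 (i + 1) (by omega) (by omega) c).2)
      else 0

def Bψ : ∀ i, Fin (lp k M 𝔏 (i + 1)) → ℝ
  | 0 => fun r =>
      (φ (emid k M 𝔏 1 one_pos (by omega) r).1).B 0 ((emid k M 𝔏 1 one_pos (by omega) r).2)
  | i + 1 =>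
      if hlt : i + 2 < k + 2 then fun r =>
        (φ (emid k M 𝔏 (i + 2) (by omega) hlt r).1).B (i + 1)
          ((emid k M 𝔏 (i + 2) (by omega) hlt r).2)
      else if heq : i + 2 = k + 2 then fun r =>
        ∑ m, h m * (φ m).B (i + 1) (Fin.cast (by simp [lp, heq]) r)
      else 0

def ψnet : NeuralNet (lp k M 𝔏) (k + 2) := ⟨Wψ k 𝔏 h φ, Bψ k 𝔏 h φ⟩

lemma params_le (hM : 0 < M) : params (lp k M 𝔏) (k + 2) ≤ M ^ 2 * params 𝔏 (k + 2) := by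
  rw [params, params, Finset.mul_sum]
  refine Finset.sum_le_sum fun n hn => ?_
  simp only [Finset.mem_range] at hn
  have hMM : M ≤ M ^ 2 := by nlinarith
  have hM1 : 1 ≤ M ^ 2 := by nlinarith
  rcases Nat.eq_zero_or_pos n with rfl | hn0
  · simp only [zero_add]
    rw [lp_zero, lp_mid k M 𝔏 one_pos (by omega)]
    calc M * 𝔏 1 * (𝔏 0 + 1) = M * (𝔏 1 * (𝔏 0 + 1)) := by ring
      _ ≤ M ^ 2 * (𝔏 1 * (𝔏 0 + 1)) := Nat.mul_le_mul_right _ hMM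
  · rcases Nat.lt_or_ge (n + 1) (k + 2) with hlt | hge
    · rw [lp_mid k M 𝔏 hn0 (by omega), lp_mid k M 𝔏 (by omega) hlt]
      have h1 : M * 𝔏 n + 1 ≤ M * (𝔏 n + 1) := by rw [Nat.mul_add, Nat.mul_one]; omega
      calc M * 𝔏 (n + 1) * (M * 𝔏 n + 1) ≤ M * 𝔏 (n + 1) * (M * (𝔏 n + 1)) :=
            Nat.mul_le_mul_left _ h1
        _ = M ^ 2 * (𝔏 (n + 1) * (𝔏 n + 1)) := by ring
    · have hEq : n + 1 = k + 2 := by omega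
      rw [hEq, lp_last, lp_mid k M 𝔏 hn0 (by omega)]
      have h1 : M * 𝔏 n + 1 ≤ M ^ 2 * (𝔏 n + 1) := by
        rw [Nat.mul_add, Nat.mul_one]
        exact Nat.add_le_add (Nat.mul_le_mul_right _ hMM) hM1
      calc 𝔏 (k + 2) * (M * 𝔏 n + 1) ≤ 𝔏 (k + 2) * (M ^ 2 * (𝔏 n + 1)) :=
            Nat.mul_le_mul_left _ h1
        _ = M ^ 2 * (𝔏 (k + 2) * (𝔏 n + 1)) := by ring

lemma pre_mid (a : ℝ → ℝ) (x : Fin (𝔏 0) → ℝ) :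
    ∀ n (hn' : n + 1 < k + 2) (r : Fin (lp k M 𝔏 (n + 1))),
      pre a (ψnet k 𝔏 h φ) (n + 1) (fun i => x (Fin.cast (lp_zero k M 𝔏) i)) r
        = pre a (φ (emid k M 𝔏 (n + 1) (by omega) hn' r).1) (n + 1) x
            (emid k M 𝔏 (n + 1) (by omega) hn' r).2 := by
  intro n
  induction n with
  | zero =>
    intro hn' r
    rw [pre_succ, pre_succ]
    congr 1
  | succ n ih =>
    intro hn' r
    rw [pre_succ, pre_succ]
    have hW : (ψnet k 𝔏 h φ).W (n + 1) = Matrix.of fun r c =>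
        if (emid k M 𝔏 (n + 2) (by omega) hn' r).1
            = (emid k M 𝔏 (n + 1) (by omega) (by omega) c).1 then
          (φ (emid k M 𝔏 (n + 2) (by omega) hn' r).1).W (n + 1)
            ((emid k M 𝔏 (n + 2) (by omega) hn' r).2)
            ((emid k M 𝔏 (n + 1) (by omega) (by omega) c).2)
        else 0 := by
      show Wψ k 𝔏 h φ (n + 1) = _
      rw [Wψ]; rw [dif_pos hn']
    have hB : (ψnet k 𝔏 h φ).B (n + 1) = fun r =>
        (φ (emid k M 𝔏 (n + 2) (by omega) hn' r).1).B (n + 1)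
          ((emid k M 𝔏 (n + 2) (by omega) hn' r).2) := by
      show Bψ k 𝔏 h φ (n + 1) = _
      rw [Bψ]; rw [dif_pos hn']
    rw [hW, hB]
    congr 1
    simp only [Matrix.mulVec, dotProduct, act_succ, Matrix.of_apply]
    rw [sum_emid (emid k M 𝔏 (n + 1) (by omega) (by omega))]
    rw [Finset.sum_eq_single ((emid k M 𝔏 (n + 2) (by omega) hn' r).1)]
    · refine Finset.sum_congr rfl fun c _ => ?_
      rw [ih (by omega) ((emid k M 𝔏 (n + 1) (by omega) (by omega)).symm
        ((emid k M 𝔏 (n + 2) (by omega) hn' r).1, c))]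
      simp
    · intro b _ hb
      simp [Ne.symm hb]
    · simp


end SumNN

open SumNN in
/-- Sums of DNNs with the same architecture (Lemma 5.1): any linear combination
`Σ_m h_m (R φ_m)` of realizations of `M` networks with the common architecture
`(𝔏 0, ..., 𝔏 𝕃)` is the realization of a network `ψ` with `P(ψ) ≤ M² P(φ_1)`. -/
theorem sum_of_neural_networks (a : ℝ → ℝ) (ha : Continuous a)
    (𝕃 M : ℕ) (h𝕃 : 2 ≤ 𝕃) (hM : 0 < M) (𝔏 : ℕ → ℕ)
    (h : Fin M → ℝ) (φ : Fin M → NeuralNet 𝔏 𝕃) :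
    ∃ (l' : ℕ → ℕ) (L' : ℕ) (ψ : NeuralNet l' L')
      (h0 : l' 0 = 𝔏 0) (hL : l' L' = 𝔏 𝕃),
      params l' L' ≤ M ^ 2 * params 𝔏 𝕃 ∧
      ∀ (x : Fin (𝔏 0) → ℝ) (j : Fin (𝔏 𝕃)),
        realize a ψ (fun i => x (Fin.cast h0 i)) (Fin.cast hL.symm j)
          = ∑ m : Fin M, h m * realize a (φ m) x j := by
  obtain ⟨k, rfl⟩ : ∃ k, 𝕃 = k + 2 := ⟨𝕃 - 2, by omega⟩
  refine ⟨lp k M 𝔏, k + 2, ψnet k 𝔏 h φ, lp_zero k M 𝔏, lp_last k M 𝔏,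
    params_le k 𝔏 hM, ?_⟩
  intro x j
  have hW : (ψnet k 𝔏 h φ).W (k + 1) = Matrix.of fun r c =>
      h (emid k M 𝔏 (k + 1) (by omega) (by omega) c).1 *
        (φ (emid k M 𝔏 (k + 1) (by omega) (by omega) c).1).W (k + 1)
          (Fin.cast (lp_last k M 𝔏) r)
          ((emid k M 𝔏 (k + 1) (by omega) (by omega) c).2) := by
    show Wψ k 𝔏 h φ (k + 1) = _
    rw [Wψ]; rw [dif_neg (by omega), dif_pos rfl]
  have hB : (ψnet k 𝔏 h φ).B (k + 1) = fun r =>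
      ∑ m, h m * (φ m).B (k + 1) (Fin.cast (lp_last k M 𝔏) r) := by
    show Bψ k 𝔏 h φ (k + 1) = _
    rw [Bψ]; rw [dif_neg (by omega), dif_pos rfl]
  show pre a (ψnet k 𝔏 h φ) (k + 2) _ _ = _
  rw [pre_succ, hW, hB]
  simp only [Matrix.mulVec, dotProduct, act_succ, Matrix.of_apply]
  rw [sum_emid (emid k M 𝔏 (k + 1) (by omega) (by omega))]
  rw [← Finset.sum_add_distrib]
  refine Finset.sum_congr rfl fun m _ => ?_
  have hkey : ∀ c : Fin (𝔏 (k + 1)),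
      pre a (ψnet k 𝔏 h φ) (k + 1) (fun i => x (Fin.cast (lp_zero k M 𝔏) i))
          ((emid k M 𝔏 (k + 1) (by omega) (by omega)).symm (m, c))
        = pre a (φ m) (k + 1) x c := by
    intro c
    rw [pre_mid k 𝔏 h φ a x k (by omega)]
    simp
  simp only [Equiv.apply_symm_apply]
  have hj : (Fin.cast (lp_last k M 𝔏) (Fin.cast (lp_last k M 𝔏).symm j)) = j := rfl
  rw [hj]
  conv_rhs => rw [show realize a (φ m) x j = pre a (φ m) (k + 2) x j from rfl, pre_succ]
  simp only [Matrix.mulVec, dotProduct, act_succ]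
  rw [mul_add, Finset.mul_sum]
  congr 1
  exact Finset.sum_congr rfl fun c _ => by rw [hkey c]; ring
end
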